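/- arXiv:1901.07818 — 2 statements merged into one kernel-verified Lean document; each statement's English description precedes it below -/
import Mathlib

section
/- Let Δ be a root system with positive system Δ^+, and let T be an element of the real span such that every simple root takes nonnegative value on −iT, with Δ(u^+) = {α ∈ Δ : α(−iT) > 0} and Δ(l) = {α ∈ Δ : α(T) = 0}, Δ^±(l) = Δ(l) ∩ Δ^±. Define W^1 = {σ ∈ W : Φ_σ ⊆ Δ(u^+)}. If σ ∈ W^1 then σ^{-1}(Δ^+(l)) ⊆ Δ^+ and σ^{-1}(Δ^-(l)) ⊆ Δ^-. -/
/-!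
A root `β ∈ Δ⁺(l)` vanishes on `t`, so it is not in `Φ_σ ⊆ Δ(u⁺)`; since `σ⁻¹` permutes
`Δ = Δ⁺ ∪ Δ⁻`, the root `σ⁻¹ β` is therefore positive. The statement for `Δ⁻(l)` follows by
applying this to `-β`.
-/

open RealInnerProductSpace

variable {V : Type*} [NormedAddCommGroup V] [InnerProductSpace ℝ V]

/-- A (crystallographic, reduced) root system in a real inner product space. -/
def IsRootSystem (Δ : Set V) : Prop :=
  Δ.Finite ∧ (0 : V) ∉ Δ ∧ Submodule.span ℝ Δ = ⊤ ∧
  (∀ α ∈ Δ, ∀ β ∈ Δ, β - (2 * ⟪β, α⟫ / ⟪α, α⟫) • α ∈ Δ) ∧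
  (∀ α ∈ Δ, ∀ β ∈ Δ, ∃ n : ℤ, 2 * ⟪β, α⟫ / ⟪α, α⟫ = (n : ℝ)) ∧
  (∀ α ∈ Δ, ∀ t : ℝ, t • α ∈ Δ → t = 1 ∨ t = -1)

/-- A base (fundamental root system) of `Δ`. -/
def IsBase (Δ Pi : Set V) : Prop :=
  Pi ⊆ Δ ∧ LinearIndependent ℝ ((↑) : Pi → V) ∧ Submodule.span ℝ Pi = ⊤ ∧
  ∀ β ∈ Δ, ∃ c : Pi →₀ ℤ,
    β = c.sum (fun i n => (n : ℝ) • (i : V)) ∧ ((∀ i, 0 ≤ c i) ∨ (∀ i, c i ≤ 0))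

/-- The positive roots determined by a base `Pi`. -/
def posRoots (Δ Pi : Set V) : Set V :=
  {β ∈ Δ | ∃ c : Pi →₀ ℤ, (∀ i, 0 ≤ c i) ∧ β = c.sum (fun i n => (n : ℝ) • (i : V))}

/-- The Weyl group of `Δ`: the subgroup of linear automorphisms generated by the
reflections along the roots. -/
def weylGroup (Δ : Set V) : Subgroup (V ≃ₗ[ℝ] V) :=
  Subgroup.closure {g | ∃ α ∈ Δ, ∀ x, g x = x - (2 * ⟪x, α⟫ / ⟪α, α⟫) • α}

/-- The inversion set `Φ_w = {β ∈ Δ⁺ | w⁻¹ β ∈ Δ⁻}` of `w`. -/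
def inversions (Δp : Set V) (w : V ≃ₗ[ℝ] V) : Set V :=
  {β ∈ Δp | w.symm β ∈ -Δp}

lemma reflect_reflect {α : V} (hα : α ≠ 0) (x : V) :
    let r : V → V := fun y => y - (2 * ⟪y, α⟫ / ⟪α, α⟫) • α
    r (r x) = x := by
  have hαα : ⟪α, α⟫ ≠ 0 := fun h => hα (inner_self_eq_zero.mp h)
  have hcoeff : 2 * ⟪x - (2 * ⟪x, α⟫ / ⟪α, α⟫) • α, α⟫ / ⟪α, α⟫ = -(2 * ⟪x, α⟫ / ⟪α, α⟫) := by
    rw [inner_sub_left, real_inner_smul_left]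
    field_simp
    ring
  simp only [hcoeff, neg_smul, sub_neg_eq_add, sub_add_cancel]

namespace IsRootSystem

variable {Δ : Set V} (hΔ : IsRootSystem Δ)
include hΔ

lemma neg_mem {β : V} (hβ : β ∈ Δ) : -β ∈ Δ := by
  have hββ : ⟪β, β⟫ ≠ 0 := fun h => hΔ.2.1 (inner_self_eq_zero.mp h ▸ hβ)
  have h := hΔ.2.2.2.1 β hβ β hβ
  rwa [mul_div_assoc, div_self hββ, mul_one, two_smul, sub_add_cancel_left] at h

open Pointwise in
lemma smul_eq_of_isReflection {g : V ≃ₗ[ℝ] V} {α : V} (hα : α ∈ Δ)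
    (hg : ∀ x, g x = x - (2 * ⟪x, α⟫ / ⟪α, α⟫) • α) : g • Δ = Δ := by
  have hmaps : ∀ β ∈ Δ, g β ∈ Δ := fun β hβ => hg β ▸ hΔ.2.2.2.1 α hα β hβ
  have hinv : ∀ x, g (g x) = x := fun x => by
    simpa only [hg] using reflect_reflect (fun h => hΔ.2.1 (h ▸ hα)) x
  refine subset_antisymm ?_ fun β hβ => ?_
  · rintro _ ⟨β, hβ, rfl⟩
    exact hmaps β hβ
  · rw [← hinv β]
    exact Set.smul_mem_smul_set (hmaps β hβ)

open Pointwise in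
lemma weylGroup_le_stabilizer : weylGroup Δ ≤ MulAction.stabilizer (V ≃ₗ[ℝ] V) Δ :=
  Subgroup.closure_le _ |>.2 fun _ ⟨_, hα, hg⟩ => hΔ.smul_eq_of_isReflection hα hg

open Pointwise in
lemma symm_apply_mem {σ : V ≃ₗ[ℝ] V} (hσ : σ ∈ weylGroup Δ) {β : V} (hβ : β ∈ Δ) :
    σ.symm β ∈ Δ := by
  have hstab : σ⁻¹ • Δ = Δ := hΔ.weylGroup_le_stabilizer (inv_mem hσ)
  rw [← hstab]
  exact Set.smul_mem_smul_set hβ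

end IsRootSystem

lemma IsBase.mem_posRoots_or_neg {Δ Pi : Set V} (hΔ : IsRootSystem Δ) (hPi : IsBase Δ Pi)
    {β : V} (hβ : β ∈ Δ) : β ∈ posRoots Δ Pi ∨ β ∈ -posRoots Δ Pi := by
  obtain ⟨c, rfl, hpos | hneg⟩ := hPi.2.2.2 β hβ
  · exact Or.inl ⟨hβ, c, hpos, rfl⟩
  · refine Or.inr ⟨hΔ.neg_mem hβ, -c, fun i => neg_nonneg.2 (hneg i), ?_⟩
    simp [Finsupp.sum_neg_index]

lemma symm_mem_posRoots_of_not_mem_inversions {Δ Pi : Set V} (hΔ : IsRootSystem Δ)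
    (hPi : IsBase Δ Pi) {σ : V ≃ₗ[ℝ] V} (hσ : σ ∈ weylGroup Δ) {β : V}
    (hβ : β ∈ posRoots Δ Pi) (hβσ : β ∉ inversions (posRoots Δ Pi) σ) :
    σ.symm β ∈ posRoots Δ Pi :=
  (hPi.mem_posRoots_or_neg hΔ (hΔ.symm_apply_mem hσ hβ.1)).resolve_right
    fun hneg => hβσ ⟨hβ, hneg⟩

theorem minimal_coset_rep_preserves_levi_signs_general
    (Δ Pi : Set V) (hΔ : IsRootSystem Δ) (hPi : IsBase Δ Pi)
    (t : V)
    (σ : V ≃ₗ[ℝ] V) (hσ : σ ∈ weylGroup Δ)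
    (hσ1 : inversions (posRoots Δ Pi) σ ⊆ {α ∈ Δ | 0 < ⟪α, t⟫}) :
    σ.symm '' ({α ∈ Δ | ⟪α, t⟫ = 0} ∩ posRoots Δ Pi) ⊆ posRoots Δ Pi ∧
    σ.symm '' ({α ∈ Δ | ⟪α, t⟫ = 0} ∩ (-(posRoots Δ Pi))) ⊆ -(posRoots Δ Pi) := by
  have hlevi : ∀ β ∈ posRoots Δ Pi, ⟪β, t⟫ = 0 → σ.symm β ∈ posRoots Δ Pi :=
    fun β hβ hβt => symm_mem_posRoots_of_not_mem_inversions hΔ hPi hσ hβ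
      fun hinv => (hσ1 hinv).2.ne' hβt
  constructor
  · rintro _ ⟨β, ⟨⟨-, hβt⟩, hβ⟩, rfl⟩
    exact hlevi β hβ hβt
  · rintro _ ⟨β, ⟨⟨-, hβt⟩, hβ⟩, rfl⟩
    simpa using hlevi (-β) hβ (by rw [inner_neg_left, hβt, neg_zero])

/-- **Proposition 2.17(2).** In the Kostant setting—`t` a vector (playing the
role of `-iT`) with `⟪α, t⟫ ≥ 0` for every simple root `α`, `Δ(u⁺) = {α ∈ Δ : ⟪α, t⟫ > 0}`,
`Δ(l) = {α ∈ Δ : ⟪α, t⟫ = 0}`—if `σ` belongs to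
`W¹ = {σ ∈ W : Φ_σ ⊆ Δ(u⁺)}` then `σ⁻¹(Δ⁺(l)) ⊆ Δ⁺` and `σ⁻¹(Δ⁻(l)) ⊆ Δ⁻`. -/
theorem minimal_coset_rep_preserves_levi_signs [FiniteDimensional ℝ V]
    (Δ Pi : Set V) (hΔ : IsRootSystem Δ) (hPi : IsBase Δ Pi)
    (t : V) (ht : ∀ α ∈ Pi, 0 ≤ ⟪α, t⟫)
    (σ : V ≃ₗ[ℝ] V) (hσ : σ ∈ weylGroup Δ)
    (hσ1 : inversions (posRoots Δ Pi) σ ⊆ {α ∈ Δ | 0 < ⟪α, t⟫}) :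
    σ.symm '' ({α ∈ Δ | ⟪α, t⟫ = 0} ∩ posRoots Δ Pi) ⊆ posRoots Δ Pi ∧
    σ.symm '' ({α ∈ Δ | ⟪α, t⟫ = 0} ∩ (-(posRoots Δ Pi))) ⊆ -(posRoots Δ Pi) :=
  minimal_coset_rep_preserves_levi_signs_general Δ Pi hΔ hPi t σ hσ hσ1
end

section
/- With Δ, Δ^+, T, W, W^1, Φ_σ as in the Kostant setting and κ the longest element of W, for σ ∈ W^1 define Δ_σ = {γ ∈ Φ_{σ^{-1}κ} : σγ ∈ Δ(u^+)}. Then σ(Δ_σ) = Δ(u^+) \ Φ_σ; in particular |Δ_σ| = |Δ(u^+)| − |Φ_σ|. -/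
open RealInnerProductSpace

variable {V : Type*} [NormedAddCommGroup V] [InnerProductSpace ℝ V]

/-!
Roots positive on `t` are positive roots, so for `α ∈ Δ(u⁺)` the root `σ⁻¹α` is positive exactly
when `α ∉ Φ_σ`. Since `κ` exchanges `Δ⁻` and `Δ⁺`, the condition `γ ∈ Φ_{σ⁻¹κ}` just says that `γ`
and `σγ` are both positive. Hence `σ` maps `Δ_σ` bijectively onto `Δ(u⁺) \ Φ_σ`, and
`Φ_σ ⊆ Δ(u⁺)` gives the count.
-/

lemma IsRootSystem.neg_mem_s12 {Δ : Set V} (hΔ : IsRootSystem Δ) {β : V} (hβ : β ∈ Δ) :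
    -β ∈ Δ := by
  have hββ : ⟪β, β⟫ ≠ 0 := inner_self_ne_zero.2 fun h => hΔ.2.1 (h ▸ hβ)
  have h := hΔ.2.2.2.1 β hβ β hβ
  rwa [mul_div_assoc, div_self hββ, mul_one, two_smul, sub_add_eq_sub_sub, sub_self,
    zero_sub] at h

open scoped Pointwise in
lemma IsRootSystem.weylGroup_le_stabilizer_s12 {Δ : Set V} (hΔ : IsRootSystem Δ) :
    weylGroup Δ ≤ MulAction.stabilizer (V ≃ₗ[ℝ] V) Δ := by
  refine (Subgroup.closure_le _).2 ?_
  rintro g ⟨α, hα, hg⟩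
  have hsub : g '' Δ ⊆ Δ := by
    rintro _ ⟨β, hβ, rfl⟩
    exact hg β ▸ hΔ.2.2.2.1 α hα β hβ
  rw [SetLike.mem_coe, MulAction.mem_stabilizer_iff, ← Set.image_smul]
  exact Set.eq_of_subset_of_ncard_le hsub (Set.ncard_image_of_injective _ g.injective).ge hΔ.1

open scoped Pointwise in
lemma IsRootSystem.apply_mem {Δ : Set V} (hΔ : IsRootSystem Δ) {g : V ≃ₗ[ℝ] V}
    (hg : g ∈ weylGroup Δ) {β : V} (hβ : β ∈ Δ) : g β ∈ Δ := by
  rw [← MulAction.mem_stabilizer_iff.1 (hΔ.weylGroup_le_stabilizer_s12 hg)]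
  exact Set.smul_mem_smul_set hβ

lemma Finsupp.sum_intCast_smul_eq_linearCombination {ι : Type*} (v : ι → V) (c : ι →₀ ℤ) :
    c.sum (fun i n => (n : ℝ) • v i) = Finsupp.linearCombination ℤ v c := by
  simp [Finsupp.linearCombination_apply, Int.cast_smul_eq_zsmul]

lemma neg_notMem_posRoots {Δ Pi : Set V} (h0 : (0 : V) ∉ Δ)
    (hli : LinearIndependent ℝ ((↑) : Pi → V)) {β : V} (hβ : β ∈ posRoots Δ Pi) :
    -β ∉ posRoots Δ Pi := by
  rintro ⟨-, c', hc', hβ'⟩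
  obtain ⟨hβΔ, c, hc, rfl⟩ := hβ
  simp only [Finsupp.sum_intCast_smul_eq_linearCombination] at hβ' hβΔ
  have hsum : Finsupp.linearCombination ℤ ((↑) : Pi → V) (c + c') = 0 := by
    rw [map_add, ← hβ', add_neg_cancel]
  have hcc' := linearIndependent_iff.1 (hli.restrict_scalars' ℤ) _ hsum
  have hc0 : c = 0 := by
    ext i
    have := DFunLike.congr_fun hcc' i
    rw [Finsupp.add_apply, Finsupp.zero_apply] at this
    rw [Finsupp.zero_apply]
    linarith [hc i, hc' i]
  exact h0 (by simpa [hc0] using hβΔ)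

lemma mem_posRoots_or_neg_mem_posRoots {Δ Pi : Set V} (hΔ : IsRootSystem Δ)
    (hPi : IsBase Δ Pi) {β : V} (hβ : β ∈ Δ) : β ∈ posRoots Δ Pi ∨ -β ∈ posRoots Δ Pi := by
  obtain ⟨c, rfl, hpos | hneg⟩ := hPi.2.2.2 β hβ
  · exact Or.inl ⟨hβ, c, hpos, rfl⟩
  · refine Or.inr ⟨hΔ.neg_mem_s12 hβ, -c, fun i => neg_nonneg.2 (hneg i), ?_⟩
    simp only [Finsupp.sum_intCast_smul_eq_linearCombination, map_neg]

lemma mem_posRoots_of_inner_pos {Δ Pi : Set V} (hPi : IsBase Δ Pi) {t : V}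
    (ht : ∀ α ∈ Pi, 0 ≤ ⟪α, t⟫) {β : V} (hβ : β ∈ Δ) (hβt : 0 < ⟪β, t⟫) :
    β ∈ posRoots Δ Pi := by
  obtain ⟨c, rfl, hpos | hneg⟩ := hPi.2.2.2 β hβ
  · exact ⟨hβ, c, hpos, rfl⟩
  · refine absurd hβt (not_lt.2 ?_)
    rw [Finsupp.sum, sum_inner]
    refine Finset.sum_nonpos fun i _ => ?_
    rw [real_inner_smul_left]
    exact mul_nonpos_of_nonpos_of_nonneg (by exact_mod_cast hneg i) (ht i i.2)

lemma symm_mem_posRoots_iff_notMem_inversions {Δ Pi : Set V} (hΔ : IsRootSystem Δ)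
    (hPi : IsBase Δ Pi) {σ : V ≃ₗ[ℝ] V} (hσ : σ ∈ weylGroup Δ) {α : V}
    (hα : α ∈ posRoots Δ Pi) :
    σ.symm α ∈ posRoots Δ Pi ↔ α ∉ inversions (posRoots Δ Pi) σ := by
  simp only [inversions, Set.mem_ofPred_eq, Set.mem_neg, hα, true_and]
  refine ⟨fun h => neg_notMem_posRoots hΔ.2.1 hPi.2.1 h, fun h => ?_⟩
  exact (mem_posRoots_or_neg_mem_posRoots hΔ hPi
    (hΔ.apply_mem (inv_mem hσ) hα.1)).resolve_right h

lemma mem_inversions_inv_mul_iff {P : Set V} {κ : V ≃ₗ[ℝ] V} (hκ : κ '' (-P) = P)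
    (σ : V ≃ₗ[ℝ] V) (γ : V) : γ ∈ inversions P (σ⁻¹ * κ) ↔ γ ∈ P ∧ σ γ ∈ P := by
  have hκP : ∀ x, κ.symm x ∈ -P ↔ x ∈ P := fun x => by
    conv_rhs => rw [← hκ, κ.image_eq_preimage_symm]
    rfl
  exact and_congr_right fun _ => hκP (σ γ)

theorem sigma_image_deltaSigma_general
    (Δ Pi : Set V) (hΔ : IsRootSystem Δ) (hPi : IsBase Δ Pi)
    (t : V) (ht : ∀ α ∈ Pi, 0 ≤ ⟪α, t⟫)
    (κ : V ≃ₗ[ℝ] V)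
    (hκlong : κ '' (-(posRoots Δ Pi)) = posRoots Δ Pi)
    (σ : V ≃ₗ[ℝ] V) (hσ : σ ∈ weylGroup Δ)
    (hσ1 : inversions (posRoots Δ Pi) σ ⊆ {α ∈ Δ | 0 < ⟪α, t⟫}) :
    σ '' {γ ∈ inversions (posRoots Δ Pi) (σ⁻¹ * κ) | σ γ ∈ {α ∈ Δ | 0 < ⟪α, t⟫}} =
      {α ∈ Δ | 0 < ⟪α, t⟫} \ inversions (posRoots Δ Pi) σ ∧
    {γ ∈ inversions (posRoots Δ Pi) (σ⁻¹ * κ) | σ γ ∈ {α ∈ Δ | 0 < ⟪α, t⟫}}.ncard =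
      {α ∈ Δ | 0 < ⟪α, t⟫}.ncard - (inversions (posRoots Δ Pi) σ).ncard := by
  set P := posRoots Δ Pi
  set U := {α ∈ Δ | 0 < ⟪α, t⟫}
  have hUP : U ⊆ P := fun α hα => mem_posRoots_of_inner_pos hPi ht hα.1 hα.2
  have himage : σ '' {γ ∈ inversions P (σ⁻¹ * κ) | σ γ ∈ U} = U \ inversions P σ := by
    ext α
    simp only [σ.image_eq_preimage_symm, Set.mem_preimage, Set.mem_ofPred_eq,
      mem_inversions_inv_mul_iff hκlong, σ.apply_symm_apply, Set.mem_sdiff]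
    constructor
    · rintro ⟨⟨hσα, -⟩, hαU⟩
      exact ⟨hαU, (symm_mem_posRoots_iff_notMem_inversions hΔ hPi hσ (hUP hαU)).1 hσα⟩
    · rintro ⟨hαU, hα⟩
      exact ⟨⟨(symm_mem_posRoots_iff_notMem_inversions hΔ hPi hσ (hUP hαU)).2 hα,
        hUP hαU⟩, hαU⟩
  refine ⟨himage, ?_⟩
  rw [← Set.ncard_image_of_injective _ σ.injective, himage,
    Set.ncard_sdiff hσ1 ((hΔ.1.subset fun α hα => hα.1).subset hσ1)]

/-- **proof of Proposition 2.18(1).** With `κ` the longest element of the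
Weyl group and `σ ∈ W¹`, for `Δ_σ = {γ ∈ Φ_{σ⁻¹κ} : σγ ∈ Δ(u⁺)}` one has
`σ(Δ_σ) = Δ(u⁺) \ Φ_σ`; in particular `|Δ_σ| = |Δ(u⁺)| − |Φ_σ|`. -/
theorem sigma_image_deltaSigma [FiniteDimensional ℝ V]
    (Δ Pi : Set V) (hΔ : IsRootSystem Δ) (hPi : IsBase Δ Pi)
    (t : V) (ht : ∀ α ∈ Pi, 0 ≤ ⟪α, t⟫)
    (κ : V ≃ₗ[ℝ] V) (hκ : κ ∈ weylGroup Δ)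
    (hκlong : κ '' (-(posRoots Δ Pi)) = posRoots Δ Pi)
    (σ : V ≃ₗ[ℝ] V) (hσ : σ ∈ weylGroup Δ)
    (hσ1 : inversions (posRoots Δ Pi) σ ⊆ {α ∈ Δ | 0 < ⟪α, t⟫}) :
    σ '' {γ ∈ inversions (posRoots Δ Pi) (σ⁻¹ * κ) | σ γ ∈ {α ∈ Δ | 0 < ⟪α, t⟫}} =
      {α ∈ Δ | 0 < ⟪α, t⟫} \ inversions (posRoots Δ Pi) σ ∧
    {γ ∈ inversions (posRoots Δ Pi) (σ⁻¹ * κ) | σ γ ∈ {α ∈ Δ | 0 < ⟪α, t⟫}}.ncard =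
      {α ∈ Δ | 0 < ⟪α, t⟫}.ncard - (inversions (posRoots Δ Pi) σ).ncard :=
  sigma_image_deltaSigma_general Δ Pi hΔ hPi t ht κ hκlong σ hσ hσ1
end
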